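/- Let G : ℝ → [0,1] be differentiable on an open interval I with G'(d) = −g(d), satisfy 0 < G(d) < 1 on I, be Lebesgue-integrable on [d, ∞) for d ∈ I, and let λ ∈ (0,1]. Define m_λ(d) := (1 − d·G(d))/(λ·(1 − G(d))) and the borrower-optimal zero-profit objective φ(d) := ∫_d^∞ G(x) dx − m_λ(d)·(1 − G(d)). Then for every d ∈ I, φ is differentiable at d with φ'(d) = ((1 − λ)·G(d) − d·g(d)) / λ. In particular, d* ∈ I is a critical point of φ if and only if d*·g(d*) = (1 − λ)·G(d*), and at such a point the pledged collateral is m_λ(d*) = (1 − d*·G(d*))/(λ·(1 − G(d*))). -/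

import Mathlib

open MeasureTheory Set

/-- The zero-profit collateral schedule `m_λ(d) := (1 − d·G(d))/(λ·(1 − G(d)))`. -/
noncomputable def zeroProfitCollateral (G : ℝ → ℝ) (lam : ℝ) (d : ℝ) : ℝ :=
  (1 - d * G d) / (lam * (1 - G d))

/-- The borrower-optimal zero-profit objective
`φ(d) := ∫_d^∞ G(x) dx − m_λ(d)·(1 − G(d))`. -/
noncomputable def bankObjective (G : ℝ → ℝ) (lam : ℝ) (d : ℝ) : ℝ :=
  (∫ x in Set.Ici d, G x) - zeroProfitCollateral G lam d * (1 - G d)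

/-!
Where `G < 1`, the factor `1 − G(d)` cancels in `m_λ(d)·(1 − G(d))`, so near `d` the objective is
`φ(x) = ∫_x^∞ G − (1 − x·G(x))/λ`. The tail integral has derivative `−G(d)` by the fundamental
theorem of calculus, and `x·G(x)` has derivative `G(d) − d·g(d)`, which gives
`φ'(d) = −G(d) + (G(d) − d·g(d))/λ = ((1 − λ)·G(d) − d·g(d))/λ`.
-/

open Filter Topology

theorem hasDerivAt_integral_Ici {E : Type*} [NormedAddCommGroup E] [NormedSpace ℝ E]
    [CompleteSpace E] {f : ℝ → E} {a d : ℝ} (had : a < d) (hf : IntegrableOn f (Ioi a))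
    (hcont : ContinuousAt f d) :
    HasDerivAt (fun x ↦ ∫ t in Ici x, f t) (-f d) d := by
  have hFTC : HasDerivAt (fun x ↦ ∫ t in a..x, f t) (f d) d :=
    intervalIntegral.integral_hasDerivAt_right
      ((intervalIntegrable_iff_integrableOn_Ioc_of_le had.le).2 (hf.mono_set Ioc_subset_Ioi_self))
      ⟨Ioi a, Ioi_mem_nhds had, hf.aestronglyMeasurable⟩ hcont
  have htail : (fun x ↦ ∫ t in Ici x, f t) =ᶠ[𝓝 d]
      fun x ↦ (∫ t in Ioi a, f t) - ∫ t in a..x, f t := by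
    filter_upwards [Ioi_mem_nhds had] with x hx
    rw [integral_Ici_eq_integral_Ioi, ← intervalIntegral.integral_Ioi_sub_Ioi hf hx.le,
      sub_sub_cancel]
  simpa using (hFTC.const_sub _).congr_of_eventuallyEq htail

theorem zeroProfitCollateral_mul_one_sub {G : ℝ → ℝ} {d : ℝ} (lam : ℝ) (hG : G d ≠ 1) :
    zeroProfitCollateral G lam d * (1 - G d) = (1 - d * G d) / lam := by
  have : 1 - G d ≠ 0 := sub_ne_zero.2 hG.symm
  rw [zeroProfitCollateral, mul_comm lam, ← div_div, div_right_comm, div_mul_cancel₀ _ this]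

theorem bankObjective_eventuallyEq {G : ℝ → ℝ} {d : ℝ} (lam : ℝ) (hcont : ContinuousAt G d)
    (hG : G d ≠ 1) :
    bankObjective G lam =ᶠ[𝓝 d] fun x ↦ (∫ t in Ici x, G t) - (1 - x * G x) / lam := by
  filter_upwards [hcont.eventually_ne hG] with x hx
  rw [bankObjective, zeroProfitCollateral_mul_one_sub lam hx]

theorem hasDerivAt_bankObjective {G g : ℝ → ℝ} {lam a d : ℝ} (hlam : lam ≠ 0) (had : a < d)
    (hint : IntegrableOn G (Ioi a)) (hderiv : HasDerivAt G (-g d) d) (hG : G d ≠ 1) :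
    HasDerivAt (bankObjective G lam) (((1 - lam) * G d - d * g d) / lam) d := by
  have htail := hasDerivAt_integral_Ici had hint hderiv.continuousAt
  have hrepay : HasDerivAt (fun x ↦ (1 - x * G x) / lam) (-(G d + d * -g d) / lam) d := by
    simpa using (((hasDerivAt_id d).mul hderiv).const_sub 1).div_const lam
  refine ((htail.sub hrepay).congr_of_eventuallyEq
    (bankObjective_eventuallyEq lam hderiv.continuousAt hG)).congr_deriv ?_
  field_simp
  ring

theorem bankObjective_deriv_and_tangency_general
    (G g : ℝ → ℝ) (I : Set ℝ) (hI : IsOpen I)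
    (hderiv : ∀ d ∈ I, HasDerivAt G (-(g d)) d)
    (hGlt : ∀ d ∈ I, G d < 1)
    (hint : ∀ d ∈ I, IntegrableOn G (Set.Ici d) volume)
    (lam : ℝ) (hlam : lam ∈ Set.Ioc (0 : ℝ) 1) :
    ∀ d ∈ I,
      HasDerivAt (bankObjective G lam) (((1 - lam) * G d - d * g d) / lam) d ∧
      (deriv (bankObjective G lam) d = 0 ↔ d * g d = (1 - lam) * G d) ∧
      zeroProfitCollateral G lam d = (1 - d * G d) / (lam * (1 - G d)) := by
  intro d hd
  obtain ⟨a, had, haI⟩ := exists_Ioc_subset_of_mem_nhds (hI.mem_nhds hd) ⟨d - 1, by linarith⟩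
  have hbI : (a + d) / 2 ∈ I := haI ⟨by linarith, by linarith⟩
  have hlam0 : lam ≠ 0 := hlam.1.ne'
  have hφ : HasDerivAt (bankObjective G lam) (((1 - lam) * G d - d * g d) / lam) d :=
    hasDerivAt_bankObjective hlam0 (by linarith) ((hint _ hbI).mono_set Ioi_subset_Ici_self)
      (hderiv d hd) (hGlt d hd).ne
  refine ⟨hφ, ?_, rfl⟩
  rw [hφ.deriv, div_eq_zero_iff, or_iff_left hlam0, sub_eq_zero, eq_comm]

/-- On an open interval `I` where `G` (valued in `[0,1]`) is differentiable with
`G' = −g`, `0 < G < 1`, and `G` is integrable on upper tails, for `λ ∈ (0,1]` the objective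
`φ` is differentiable with `φ'(d) = ((1 − λ)·G(d) − d·g(d))/λ`; hence `d* ∈ I` is a critical
point of `φ` iff `d*·g(d*) = (1 − λ)·G(d*)`, with collateral
`m_λ(d*) = (1 − d*·G(d*))/(λ·(1 − G(d*)))`. -/
theorem bankObjective_deriv_and_tangency
    (G g : ℝ → ℝ) (I : Set ℝ) (hI : IsOpen I) (hI' : I.OrdConnected)
    (hG01 : ∀ x, G x ∈ Set.Icc (0 : ℝ) 1)
    (hderiv : ∀ d ∈ I, HasDerivAt G (-(g d)) d)
    (hGpos : ∀ d ∈ I, 0 < G d) (hGlt : ∀ d ∈ I, G d < 1)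
    (hint : ∀ d ∈ I, IntegrableOn G (Set.Ici d) volume)
    (lam : ℝ) (hlam : lam ∈ Set.Ioc (0 : ℝ) 1) :
    ∀ d ∈ I,
      HasDerivAt (bankObjective G lam) (((1 - lam) * G d - d * g d) / lam) d ∧
      (deriv (bankObjective G lam) d = 0 ↔ d * g d = (1 - lam) * G d) ∧
      zeroProfitCollateral G lam d = (1 - d * G d) / (lam * (1 - G d)) :=
  bankObjective_deriv_and_tangency_general G g I hI hderiv hGlt hint lam hlam
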